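/- arXiv:1809.06910 — 2 statements merged into one kernel-verified Lean document; each statement's English description precedes it below -/
import Mathlib

section
/- Fix r ≥ 1, constants β > 0, θ ∈ (0,1), λ > 0, η₀ > 0, w_max > 0, ẋ_max > 0, and let x : ℝ → ℝ^r be differentiable with ‖x'(τ)‖_∞ ≤ ẋ_max for all τ, w : ℝ → ℝ^r with ‖w(t)‖_∞ ≤ w_max for all t, and η : ℝ → ℝ with η(t) ≥ η₀ e^{−λ t} for all t. Let (t_k)_{k∈ℕ} be a strictly increasing sequence of event times such that for every k, the triggering condition θ (β ‖x(t_k) − x(t_{k+1})‖₁ − w(t_{k+1})ᵀ (x(t_k) − x(t_{k+1}))) ≥ η(t_{k+1}) holds. Then the sequence (t_k) has no finite limit: sup_k t_k = +∞ (i.e., there is no Zeno behavior; infinitely many events cannot accumulate in finite time). -/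
/-!
If the event times stayed bounded they would converge to some `l`, so the inter-event gaps
would tend to `0`. But the triggering condition forces a gap proportional to the threshold:
the left-hand side is at most `θ (β + w_max) r ẋ_max (t_{k+1} - t_k)` by the mean value theorem
and the `ℓ^∞`–`ℓ¹` duality, while the threshold stays above `η₀ e^{-λ l} > 0`.
-/

open Filter Topology

theorem tendsto_atTop_of_le_mul_sub_of_antitone {t : ℕ → ℝ} (ht : Monotone t) {f : ℝ → ℝ}
    (hf : Antitone f) (hf_pos : ∀ s, 0 < f s) (C : ℝ)
    (hgap : ∀ k, f (t (k + 1)) ≤ C * (t (k + 1) - t k)) :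
    Tendsto t atTop atTop := by
  rcases tendsto_atTop_of_monotone ht with h | ⟨l, hl⟩
  · exact h
  have hgap_lim : Tendsto (fun k ↦ C * (t (k + 1) - t k)) atTop (𝓝 0) := by
    simpa using ((hl.comp (tendsto_add_atTop_nat 1)).sub hl).const_mul C
  have hfl : f l ≤ 0 := ge_of_tendsto' hgap_lim fun k ↦
    (hf (ht.ge_of_tendsto hl (k + 1))).trans (hgap k)
  exact absurd hfl (hf_pos l).not_ge

theorem sum_abs_le_card_mul_norm {ι : Type*} [Fintype ι] (v : ι → ℝ) :
    ∑ i, |v i| ≤ Fintype.card ι * ‖v‖ := by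
  simpa using Finset.sum_le_card_nsmul Finset.univ (fun i ↦ |v i|) ‖v‖
    fun i _ ↦ by simpa using norm_le_pi_norm v i

theorem abs_sum_mul_le_norm_mul_sum_abs {ι : Type*} [Fintype ι] (w d : ι → ℝ) :
    |∑ i, w i * d i| ≤ ‖w‖ * ∑ i, |d i| := by
  rw [Finset.mul_sum]
  refine (Finset.abs_sum_le_sum_abs _ _).trans (Finset.sum_le_sum fun i _ ↦ ?_)
  rw [abs_mul]
  exact mul_le_mul_of_nonneg_right (by simpa using norm_le_pi_norm w i) (abs_nonneg _)

theorem sum_abs_sub_le_of_norm_deriv_le {ι : Type*} [Fintype ι] {x x' : ℝ → ι → ℝ} {M : ℝ}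
    (hder : ∀ τ, HasDerivAt x (x' τ) τ) (hx' : ∀ τ, ‖x' τ‖ ≤ M) {a b : ℝ} (hab : a ≤ b) :
    ∑ i, |x a i - x b i| ≤ Fintype.card ι * (M * (b - a)) := by
  have hmvt : ‖x b - x a‖ ≤ M * (b - a) :=
    norm_image_sub_le_of_norm_deriv_le_segment' (fun τ _ ↦ (hder τ).hasDerivWithinAt)
      (fun τ _ ↦ hx' τ) b (Set.right_mem_Icc.2 hab)
  calc ∑ i, |x a i - x b i| = ∑ i, |(x b - x a) i| := by simp [abs_sub_comm]
    _ ≤ Fintype.card ι * ‖x b - x a‖ := sum_abs_le_card_mul_norm _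
    _ ≤ Fintype.card ι * (M * (b - a)) := by gcongr

theorem mul_sum_abs_sub_sum_mul_le {ι : Type*} [Fintype ι] {W : ℝ} (β : ℝ) (w d : ι → ℝ)
    (hw : ‖w‖ ≤ W) : β * ∑ i, |d i| - ∑ i, w i * d i ≤ (β + W) * ∑ i, |d i| := by
  have hdual : -(W * ∑ i, |d i|) ≤ ∑ i, w i * d i :=
    calc -(W * ∑ i, |d i|) ≤ -(‖w‖ * ∑ i, |d i|) := by gcongr
      _ ≤ -|∑ i, w i * d i| := neg_le_neg (abs_sum_mul_le_norm_mul_sum_abs w d)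
      _ ≤ ∑ i, w i * d i := neg_abs_le _
  linarith

theorem no_zeno_behavior_general
    (r : ℕ) (β θ lam η₀ wmax xdmax : ℝ)
    (hβ : 0 < β) (hθ : θ ∈ Set.Ioo (0 : ℝ) 1) (hlam : 0 < lam) (hη₀ : 0 < η₀)
    (hwmax : 0 < wmax)
    (x x' : ℝ → Fin r → ℝ)
    (hder : ∀ τ : ℝ, HasDerivAt x (x' τ) τ)
    (hxd : ∀ τ : ℝ, ‖x' τ‖ ≤ xdmax)
    (w : ℝ → Fin r → ℝ) (hw : ∀ t : ℝ, ‖w t‖ ≤ wmax)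
    (η : ℝ → ℝ) (hη : ∀ t : ℝ, η₀ * Real.exp (-lam * t) ≤ η t)
    (t : ℕ → ℝ) (hmono : StrictMono t)
    (htrig : ∀ k : ℕ, θ * (β * (∑ a, |x (t k) a - x (t (k + 1)) a|)
        - ∑ a, w (t (k + 1)) a * (x (t k) a - x (t (k + 1)) a)) ≥ η (t (k + 1))) :
    Filter.Tendsto t Filter.atTop Filter.atTop := by
  have hθ₀ : 0 ≤ θ := hθ.1.le
  have hβw : 0 ≤ β + wmax := (add_pos hβ hwmax).le
  have hthreshold : Antitone fun s ↦ η₀ * Real.exp (-lam * s) := fun _ _ hab ↦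
    mul_le_mul_of_nonneg_left (Real.exp_le_exp.2 (by nlinarith)) hη₀.le
  refine tendsto_atTop_of_le_mul_sub_of_antitone hmono.monotone hthreshold (fun s ↦ by positivity)
    (θ * (β + wmax) * (r * xdmax)) fun k ↦ ?_
  calc η₀ * Real.exp (-lam * t (k + 1)) ≤ η (t (k + 1)) := hη _
    _ ≤ _ := htrig k
    _ ≤ θ * ((β + wmax) * ∑ a, |x (t k) a - x (t (k + 1)) a|) :=
      mul_le_mul_of_nonneg_left (mul_sum_abs_sub_sum_mul_le β _ _ (hw _)) hθ₀
    _ ≤ θ * ((β + wmax) * (r * (xdmax * (t (k + 1) - t k)))) := by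
      have hx := sum_abs_sub_le_of_norm_deriv_le hder hxd (hmono k.lt_succ_self).le
      rw [Fintype.card_fin] at hx
      exact mul_le_mul_of_nonneg_left (mul_le_mul_of_nonneg_left hx hβw) hθ₀
    _ = θ * (β + wmax) * (r * xdmax) * (t (k + 1) - t k) := by ring

/-- exclusion of Zeno behavior.  For a strictly increasing sequence of event
times `(t_k)` of an agent with state `x : ℝ → ℝ^r` (sup norm on `Fin r → ℝ`, `‖x'‖_∞ ≤ ẋ_max`),
bounded input `‖w(t)‖_∞ ≤ w_max`, and internal triggering variable `η(t) ≥ η₀ e^{-λ t}`, if the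
triggering condition holds at every event, the event times tend to `+∞` (they cannot
accumulate in finite time). -/
theorem no_zeno_behavior
    (r : ℕ) (hr : 1 ≤ r) (β θ lam η₀ wmax xdmax : ℝ)
    (hβ : 0 < β) (hθ : θ ∈ Set.Ioo (0 : ℝ) 1) (hlam : 0 < lam) (hη₀ : 0 < η₀)
    (hwmax : 0 < wmax) (hxdmax : 0 < xdmax)
    (x x' : ℝ → Fin r → ℝ)
    (hder : ∀ τ : ℝ, HasDerivAt x (x' τ) τ)
    (hxd : ∀ τ : ℝ, ‖x' τ‖ ≤ xdmax)
    (w : ℝ → Fin r → ℝ) (hw : ∀ t : ℝ, ‖w t‖ ≤ wmax)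
    (η : ℝ → ℝ) (hη : ∀ t : ℝ, η₀ * Real.exp (-lam * t) ≤ η t)
    (t : ℕ → ℝ) (hmono : StrictMono t)
    (htrig : ∀ k : ℕ, θ * (β * (∑ a, |x (t k) a - x (t (k + 1)) a|)
        - ∑ a, w (t (k + 1)) a * (x (t k) a - x (t (k + 1)) a)) ≥ η (t (k + 1))) :
    Filter.Tendsto t Filter.atTop Filter.atTop :=
  no_zeno_behavior_general r β θ lam η₀ wmax xdmax hβ hθ hlam hη₀ hwmax x x' hder hxd w hw η hη t
    hmono htrig
end

section
/- Let G be a connected undirected graph on n vertices and let B ∈ ℝ^{n×ℓ} be the oriented incidence matrix obtained by regarding each undirected edge as two oppositely oriented directed edges. Let (BᵀB)⁺ denote the Moore–Penrose pseudoinverse of BᵀB. Then B (BᵀB)⁺ Bᵀ = I_n − (1/n) 1_n 1_nᵀ. -/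
/-!
Write `B` for the incidence matrix and `J = (1/n) 1 1ᵀ`. The Penrose condition
`(BᵀB) P (BᵀB) = BᵀB` gives `B P Bᵀ B = B`, since `BᵀB X = 0` forces `B X = 0`.
Every column of `B` sums to zero, so `J B = 0` and `Bᵀ J = 0`. On a connected graph a row
vector `x` with `x B = 0` is constant, i.e. `x J = x`; applied to the rows of
`D = B P Bᵀ - (1 - J)`, which satisfies `D B = 0`, this gives `D = D J = 0 - J + J² = 0`.
-/

open Matrix Kronecker

/-- Doubled-edge oriented incidence matrix of a simple graph. -/
noncomputable def dartIncidence {V : Type*} [Fintype V] [DecidableEq V] (G : SimpleGraph V)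
    [DecidableRel G.Adj] : Matrix V G.Dart ℝ :=
  Matrix.of fun v d => if d.snd = v then 1 else if d.fst = v then -1 else 0

namespace Matrix

variable {m n : Type*} [Fintype m] [Fintype n] [DecidableEq n]

theorem mul_mul_transpose_mul_eq_self (B : Matrix m n ℝ) (P : Matrix n n ℝ)
    (hP : (Bᵀ * B) * P * (Bᵀ * B) = Bᵀ * B) : B * P * Bᵀ * B = B := by
  have h : (Bᴴ * B) * (P * (Bᵀ * B) - 1) = 0 := by
    rw [conjTranspose_eq_transpose_of_trivial, Matrix.mul_sub, Matrix.mul_one,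
      ← Matrix.mul_assoc, hP, sub_self]
  rw [conjTranspose_mul_self_mul_eq_zero, Matrix.mul_sub, Matrix.mul_one, sub_eq_zero] at h
  simpa only [Matrix.mul_assoc] using h

end Matrix

noncomputable def averagingMatrix (V : Type*) [Fintype V] : Matrix V V ℝ :=
  Matrix.of fun _ _ => 1 / Fintype.card V

theorem averagingMatrix_transpose (V : Type*) [Fintype V] :
    (averagingMatrix V)ᵀ = averagingMatrix V :=
  rfl

theorem mul_averagingMatrix_apply {ι V : Type*} [Fintype V] (M : Matrix ι V ℝ) (i : ι) (j : V) :
    (M * averagingMatrix V) i j = (∑ k, M i k) / Fintype.card V := by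
  simp only [mul_apply, averagingMatrix, of_apply, mul_one_div, Finset.sum_div]

section Incidence

variable {V : Type*} [Fintype V] [DecidableEq V] {G : SimpleGraph V} [DecidableRel G.Adj]

theorem vecMul_dartIncidence (x : V → ℝ) :
    x ᵥ* dartIncidence G = fun d => x d.snd - x d.fst := by
  funext d
  have hne : d.snd ≠ d.fst := d.fst_ne_snd.symm
  simp only [vecMul, dotProduct]
  rw [Fintype.sum_eq_add d.snd d.fst hne fun w hw => by
    simp [dartIncidence, Ne.symm hw.1, Ne.symm hw.2]]
  simp [dartIncidence, sub_eq_add_neg]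

theorem averagingMatrix_mul_dartIncidence : averagingMatrix V * dartIncidence G = 0 := by
  ext u d
  rw [mul_apply_eq_vecMul, vecMul_dartIncidence]
  exact sub_self _

theorem dartIncidence_transpose_mul_averagingMatrix :
    (dartIncidence G)ᵀ * averagingMatrix V = 0 := by
  rw [← averagingMatrix_transpose, ← transpose_mul, averagingMatrix_mul_dartIncidence,
    transpose_zero]

theorem SimpleGraph.Preconnected.apply_eq_of_vecMul_dartIncidence_eq_zero
    (hG : G.Preconnected) {x : V → ℝ} (hx : x ᵥ* dartIncidence G = 0) (u v : V) :
    x u = x v := by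
  have hadj : ∀ d : G.Dart, x d.fst = x d.snd := fun d =>
    (sub_eq_zero.mp (congrFun (vecMul_dartIncidence (G := G) x ▸ hx) d)).symm
  obtain ⟨p⟩ := hG u v
  induction p with
  | nil => rfl
  | cons h _ ih => exact (hadj ⟨(_, _), h⟩).trans ih

theorem SimpleGraph.Preconnected.mul_averagingMatrix_eq_self {ι : Type*} (hG : G.Preconnected)
    {M : Matrix ι V ℝ} (hM : M * dartIncidence G = 0) : M * averagingMatrix V = M := by
  ext i j
  have : Nonempty V := ⟨j⟩
  have hrow : ∀ k, M i k = M i j := fun k => hG.apply_eq_of_vecMul_dartIncidence_eq_zero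
    (by rw [← mul_apply_eq_vecMul, hM]; rfl) k j
  have hcard : (Fintype.card V : ℝ) ≠ 0 := Nat.cast_ne_zero.mpr Fintype.card_ne_zero
  rw [mul_averagingMatrix_apply, Finset.sum_congr rfl fun k _ => hrow k, Finset.sum_const,
    Finset.card_univ, nsmul_eq_mul, mul_div_cancel_left₀ _ hcard]

end Incidence

theorem incidence_mul_pinv_mul_transpose_eq_centering_general
    {V : Type*} [Fintype V] [DecidableEq V] (G : SimpleGraph V) [DecidableRel G.Adj]
    (hG : G.Connected)
    (P : Matrix G.Dart G.Dart ℝ)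
    (h1 : ((dartIncidence G)ᵀ * dartIncidence G) * P * ((dartIncidence G)ᵀ * dartIncidence G)
        = (dartIncidence G)ᵀ * dartIncidence G) :
    dartIncidence G * P * (dartIncidence G)ᵀ
      = 1 - Matrix.of (fun _ _ : V => (1 : ℝ) / Fintype.card V) := by
  change _ = 1 - averagingMatrix V
  set B := dartIncidence G
  set J := averagingMatrix V
  have hJB : J * B = 0 := averagingMatrix_mul_dartIncidence
  have hBJ : Bᵀ * J = 0 := dartIncidence_transpose_mul_averagingMatrix
  have hJJ : J * J = J := hG.preconnected.mul_averagingMatrix_eq_self hJB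
  have hDB : (B * P * Bᵀ - (1 - J)) * B = 0 := by
    rw [Matrix.sub_mul, B.mul_mul_transpose_mul_eq_self P h1, Matrix.sub_mul, Matrix.one_mul, hJB,
      sub_zero, sub_self]
  rw [← sub_eq_zero, ← hG.preconnected.mul_averagingMatrix_eq_self hDB, Matrix.sub_mul,
    Matrix.mul_assoc, hBJ, Matrix.mul_zero, Matrix.sub_mul, Matrix.one_mul, hJJ, sub_self, sub_zero]

/-- for a connected graph with doubled-edge oriented incidence matrix `B`,
and `(BᵀB)⁺` the Moore–Penrose pseudoinverse of `BᵀB` (characterized by the four Penrose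
conditions), one has `B (BᵀB)⁺ Bᵀ = Iₙ - (1/n) 1ₙ 1ₙᵀ`. -/
theorem incidence_mul_pinv_mul_transpose_eq_centering
    {V : Type*} [Fintype V] [DecidableEq V] (G : SimpleGraph V) [DecidableRel G.Adj]
    (hG : G.Connected)
    (P : Matrix G.Dart G.Dart ℝ)
    (h1 : ((dartIncidence G)ᵀ * dartIncidence G) * P * ((dartIncidence G)ᵀ * dartIncidence G)
        = (dartIncidence G)ᵀ * dartIncidence G)
    (h2 : P * ((dartIncidence G)ᵀ * dartIncidence G) * P = P)
    (h3 : (((dartIncidence G)ᵀ * dartIncidence G) * P)ᵀ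
        = ((dartIncidence G)ᵀ * dartIncidence G) * P)
    (h4 : (P * ((dartIncidence G)ᵀ * dartIncidence G))ᵀ
        = P * ((dartIncidence G)ᵀ * dartIncidence G)) :
    dartIncidence G * P * (dartIncidence G)ᵀ
      = 1 - Matrix.of (fun _ _ : V => (1 : ℝ) / Fintype.card V) :=
  incidence_mul_pinv_mul_transpose_eq_centering_general G hG P h1
end
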